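/- Let V be a finite-dimensional real vector space with symmetric positive semidefinite bilinear forms b and s such that a := b + s is positive definite, and let (φⁿ) and (φ̃ⁿ) be two sequences satisfying a(φⁿ⁺¹, ψ) = b(φⁿ, ψ) and a(φ̃ⁿ⁺¹, ψ) = b(φ̃ⁿ, ψ) for all ψ ∈ V. Then for all n ≥ 1, a(φ̃ⁿ − φⁿ, φ̃ⁿ − φⁿ)^{1/2} ≤ b(φ̃⁰ − φ⁰, φ̃⁰ − φ⁰)^{1/2}. -/
import Mathlib

/-- Cauchy–Schwarz for a symmetric positive semidefinite bilinear form. -/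
lemma cs_aux {V : Type*} [AddCommGroup V] [Module ℝ V]
    (b : LinearMap.BilinForm ℝ V)
    (hbsymm : ∀ x y, b x y = b y x) (hbpos : ∀ x, 0 ≤ b x x)
    (x y : V) : (b x y) ^ 2 ≤ b x x * b y y := by
  have h : ∀ t : ℝ, 0 ≤ b x x * (t * t) + (2 * b x y) * t + b y y := by
    intro t
    have h0 := hbpos (t • x + y)
    have hexp : b (t • x + y) (t • x + y)
        = b x x * (t * t) + (2 * b x y) * t + b y y := by
      simp only [map_add, LinearMap.add_apply, map_smul, LinearMap.smul_apply,
        smul_eq_mul]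
      rw [hbsymm y x]
      ring
    linarith [hexp ▸ h0]
  have hd : discrim (b x x) (2 * b x y) (b y y) ≤ 0 := discrim_le_zero h
  rw [discrim] at hd
  nlinarith [hd]

/-- Uniform-in-n closeness of two iterated ghost-penalty extension sequences
with different initial data. -/
theorem stmt11
    {V : Type*} [AddCommGroup V] [Module ℝ V] [FiniteDimensional ℝ V]
    (b s : LinearMap.BilinForm ℝ V)
    (hbsymm : ∀ x y, b x y = b y x) (hbpos : ∀ x, 0 ≤ b x x)
    (hssymm : ∀ x y, s x y = s y x) (hspos : ∀ x, 0 ≤ s x x)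
    (a : LinearMap.BilinForm ℝ V) (ha : ∀ x y, a x y = b x y + s x y)
    (hadef : ∀ x, x ≠ 0 → 0 < a x x)
    (φ φtil : ℕ → V)
    (hrec : ∀ n, ∀ ψ : V, a (φ (n + 1)) ψ = b (φ n) ψ)
    (hrec' : ∀ n, ∀ ψ : V, a (φtil (n + 1)) ψ = b (φtil n) ψ) :
    ∀ n : ℕ, 1 ≤ n →
      Real.sqrt (a (φtil n - φ n) (φtil n - φ n)) ≤
        Real.sqrt (b (φtil 0 - φ 0) (φtil 0 - φ 0)) := by
  set δ : ℕ → V := fun n => φtil n - φ n with hδdef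
  have hδrec : ∀ n, ∀ ψ : V, a (δ (n + 1)) ψ = b (δ n) ψ := by
    intro n ψ
    simp only [hδdef, map_sub, LinearMap.sub_apply]
    rw [hrec n ψ, hrec' n ψ]
  -- a is nonneg
  have hapos : ∀ x, 0 ≤ a x x := fun x => by
    rw [ha]; exact add_nonneg (hbpos x) (hspos x)
  have hble : ∀ x, b x x ≤ a x x := fun x => by
    rw [ha]; linarith [hspos x]
  -- key step: a(δ(n+1)) ≤ b(δ n)
  have hkey : ∀ n, a (δ (n + 1)) (δ (n + 1)) ≤ b (δ n) (δ n) := by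
    intro n
    set A := a (δ (n + 1)) (δ (n + 1)) with hA
    set B := b (δ n) (δ n) with hB
    have hAB : A = b (δ n) (δ (n + 1)) := hδrec n (δ (n + 1))
    have hcs : (b (δ n) (δ (n + 1))) ^ 2 ≤ B * b (δ (n + 1)) (δ (n + 1)) :=
      cs_aux b hbsymm hbpos _ _
    have hba : b (δ (n + 1)) (δ (n + 1)) ≤ A := hble _
    have hA0 : 0 ≤ A := hapos _
    have hB0 : 0 ≤ B := hbpos _
    rcases eq_or_lt_of_le hA0 with h | h
    · linarith
    · nlinarith [hcs, hba, hAB]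
  -- b(δ n) ≤ b(δ 0)
  have hmono : ∀ n, b (δ n) (δ n) ≤ b (δ 0) (δ 0) := by
    intro n
    induction n with
    | zero => exact le_refl _
    | succ m ih =>
      have := hble (δ (m + 1))
      linarith [hkey m]
  intro n hn
  obtain ⟨m, rfl⟩ := Nat.exists_eq_add_of_le hn
  apply Real.sqrt_le_sqrt
  calc a (δ (1 + m)) (δ (1 + m)) ≤ b (δ m) (δ m) := by
        have := hkey m; rwa [Nat.add_comm 1 m]
    _ ≤ b (δ 0) (δ 0) := hmono m
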